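/- Let V : ℝ³ → ℝ be continuous with V(λx) = λ^s V(x) for all λ > 0 and some s > 2, and V(x) > 0 for |x| = 1. Then for all g > 0 and Ω ≥ 0, setting ω = g^{−(s−2)/(2(s+3))} Ω, the Thomas–Fermi minimizers satisfy the exact scaling relation g^{3/(s+3)} ρ^TF_{g,Ω}( g^{1/(s+3)} x ) = ρ^TF_{1,ω}(x) for almost every x ∈ ℝ³. -/

import Mathlib

open MeasureTheory Filter Topology

noncomputable section

/-- Three-dimensional Euclidean space. -/
abbrev E3 := EuclideanSpace ℝ (Fin 3)

/-- The distance `r(x) = √(x₁² + x₂²)` from `x` to the `x₃`-axis. -/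
def rax (x : E3) : ℝ := Real.sqrt (x 0 ^ 2 + x 1 ^ 2)

/-- The integrand of the 3D Thomas–Fermi functional:
`V ρ − (Ω²/4) r² ρ + g ρ²`. -/
def tfIntegrand (V : E3 → ℝ) (g Ω : ℝ) (ρ : E3 → ℝ) (x : E3) : ℝ :=
  V x * ρ x - Ω ^ 2 / 4 * rax x ^ 2 * ρ x + g * ρ x ^ 2

/-- Admissible densities for the 3D Thomas–Fermi problem: measurable, nonnegative,
in `L¹ ∩ L²`, with finite potential terms and unit mass. -/
def tfAdmissible (V : E3 → ℝ) (ρ : E3 → ℝ) : Prop :=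
  Measurable ρ ∧ (∀ x, 0 ≤ ρ x) ∧ Integrable ρ ∧ Integrable (fun x => ρ x ^ 2) ∧
    Integrable (fun x => V x * ρ x) ∧ Integrable (fun x => rax x ^ 2 * ρ x) ∧
    (∫ x, ρ x) = 1

/-- The 3D Thomas–Fermi energy `E^TF_{g,Ω}`. -/
def ETF (V : E3 → ℝ) (g Ω : ℝ) : ℝ :=
  sInf { e | ∃ ρ : E3 → ℝ, tfAdmissible V ρ ∧ e = ∫ x, tfIntegrand V g Ω ρ x }

/-- The candidate Thomas–Fermi minimizer with chemical potential `μ`: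
`ρ^TF_{g,Ω}(x) = (1/(2g)) [μ + (Ω²/4) r(x)² − V(x)]₊`. -/
def rhoTF (V : E3 → ℝ) (g Ω μ : ℝ) (x : E3) : ℝ :=
  1 / (2 * g) * max (μ + Ω ^ 2 / 4 * rax x ^ 2 - V x) 0

/-- Homogeneity of degree `s`: `V(λx) = λ^s V(x)` for all `λ > 0`. -/
def Homogeneous (V : E3 → ℝ) (s : ℝ) : Prop :=
  ∀ lam : ℝ, 0 < lam → ∀ x : E3, V (lam • x) = lam ^ s * V x

/-- The effective potential `W(x) = V(x) − (1/4) r(x)²`. -/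
def Wpot (V : E3 → ℝ) (x : E3) : ℝ := V x - 1 / 4 * rax x ^ 2

/-!
Under `x ↦ λx` the homogeneity `V(λx) = λ^s V(x)` turns `ρ^TF_{g,Ω}(λx)` into `(λ^s/g) ρ^TF_{1,ω}(x)`
for a rescaled angular velocity `ω` and chemical potential; the choice `λ = g^{1/(s+3)}` makes the
prefactor `g^{-3/(s+3)} = λ^{-3}`, exactly the Jacobian factor, so the rescaled density still has
unit mass. Since `ρ^TF_{1,ω}` is monotone in the chemical potential, two chemical potentials giving
the same mass yield densities that agree almost everywhere.
-/

lemma rax_smul {c : ℝ} (hc : 0 ≤ c) (x : E3) : rax (c • x) = c * rax x := by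
  unfold rax
  simp only [PiLp.smul_apply, smul_eq_mul]
  rw [show (c * x 0) ^ 2 + (c * x 1) ^ 2 = c ^ 2 * (x 0 ^ 2 + x 1 ^ 2) by ring,
    Real.sqrt_mul (sq_nonneg c), Real.sqrt_sq hc]

lemma rhoTF_smul {V : E3 → ℝ} {s : ℝ} (hhom : Homogeneous V s) (g Ω μ : ℝ) {lam : ℝ}
    (hlam : 0 < lam) (x : E3) :
    rhoTF V g Ω μ (lam • x) =
      lam ^ s / g * rhoTF V 1 (lam ^ (1 - s / 2) * Ω) (lam ^ (-s) * μ) x := by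
  have hinv : lam ^ s * lam ^ (-s) = 1 := by
    rw [← Real.rpow_add hlam, add_neg_cancel, Real.rpow_zero]
  have hsq : lam ^ s * (lam ^ (1 - s / 2)) ^ 2 = lam ^ 2 := by
    rw [← Real.rpow_natCast, ← Real.rpow_mul hlam.le, ← Real.rpow_add hlam,
      ← Real.rpow_natCast lam 2]
    congr 1
    push_cast
    ring
  have hpositivePart : max (μ + Ω ^ 2 / 4 * (lam * rax x) ^ 2 - lam ^ s * V x) 0 =
      lam ^ s * max (lam ^ (-s) * μ + (lam ^ (1 - s / 2) * Ω) ^ 2 / 4 * rax x ^ 2 - V x) 0 := by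
    rw [mul_max_of_nonneg _ _ (Real.rpow_nonneg hlam.le s), mul_zero]
    congr 1
    linear_combination (-μ) * hinv - (Ω ^ 2 / 4 * rax x ^ 2) * hsq
  unfold rhoTF
  rw [rax_smul hlam.le, hhom lam hlam, hpositivePart]
  ring

lemma rhoTF_scaling {V : E3 → ℝ} {s : ℝ} (hhom : Homogeneous V s) (hs : s + 3 ≠ 0)
    {g : ℝ} (hg : 0 < g) (Ω μ : ℝ) (x : E3) :
    g ^ ((3 : ℝ) / (s + 3)) * rhoTF V g Ω μ (g ^ ((1 : ℝ) / (s + 3)) • x) =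
      rhoTF V 1 (g ^ (-((s - 2) / (2 * (s + 3)))) * Ω) (g ^ (-(s / (s + 3))) * μ) x := by
  have hprefactor : g ^ ((3 : ℝ) / (s + 3)) * ((g ^ ((1 : ℝ) / (s + 3))) ^ s / g) = 1 := by
    rw [← Real.rpow_mul hg.le, mul_div_assoc', ← Real.rpow_add hg,
      show 3 / (s + 3) + 1 / (s + 3) * s = 1 by field_simp; ring, Real.rpow_one, div_self hg.ne']
  rw [rhoTF_smul hhom g Ω μ (Real.rpow_pos_of_pos hg _), ← mul_assoc, hprefactor, one_mul,
    ← Real.rpow_mul hg.le, ← Real.rpow_mul hg.le]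
  congr 4
  · field_simp
    ring
  · field_simp

lemma integral_rhoTF_scaling {V : E3 → ℝ} {s : ℝ} (hhom : Homogeneous V s) (hs : s + 3 ≠ 0)
    {g : ℝ} (hg : 0 < g) (Ω μ : ℝ) :
    ∫ x, rhoTF V 1 (g ^ (-((s - 2) / (2 * (s + 3)))) * Ω) (g ^ (-(s / (s + 3))) * μ) x =
      ∫ x, rhoTF V g Ω μ x := by
  have hjacobian : (g ^ ((1 : ℝ) / (s + 3))) ^ 3 = g ^ ((3 : ℝ) / (s + 3)) := by
    rw [← Real.rpow_natCast, ← Real.rpow_mul hg.le]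
    congr 1
    push_cast
    ring
  simp_rw [← rhoTF_scaling hhom hs hg]
  rw [integral_const_mul, Measure.integral_comp_smul_of_nonneg _ _ _ (hR := by positivity),
    finrank_euclideanSpace_fin, hjacobian, smul_eq_mul, ← mul_assoc,
    mul_inv_cancel₀ (by positivity), one_mul]

lemma rhoTF_mono_chemicalPotential (V : E3 → ℝ) {g : ℝ} (hg : 0 ≤ g) (Ω : ℝ) {μ₁ μ₂ : ℝ}
    (h : μ₁ ≤ μ₂) (x : E3) : rhoTF V g Ω μ₁ x ≤ rhoTF V g Ω μ₂ x := by
  unfold rhoTF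
  gcongr

lemma rhoTF_ae_eq_of_integral_eq (V : E3 → ℝ) {g : ℝ} (hg : 0 ≤ g) (Ω : ℝ) {μ₁ μ₂ : ℝ}
    (h : ∫ x, rhoTF V g Ω μ₁ x = ∫ x, rhoTF V g Ω μ₂ x) (hne : ∫ x, rhoTF V g Ω μ₁ x ≠ 0) :
    rhoTF V g Ω μ₁ =ᵐ[volume] rhoTF V g Ω μ₂ := by
  have hint₁ := Integrable.of_integral_ne_zero hne
  have hint₂ := Integrable.of_integral_ne_zero (h ▸ hne)
  rcases le_total μ₁ μ₂ with hle | hle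
  · exact (integral_eq_iff_of_ae_le hint₁ hint₂
      (ae_of_all _ (rhoTF_mono_chemicalPotential V hg Ω hle))).1 h
  · exact ((integral_eq_iff_of_ae_le hint₂ hint₁
      (ae_of_all _ (rhoTF_mono_chemicalPotential V hg Ω hle))).1 h.symm).symm

theorem tf3_density_scaling_general (V : E3 → ℝ) (s : ℝ) (hs : 2 < s)
    (hhom : Homogeneous V s)
    (g Ω : ℝ) (hg : 0 < g)
    (μ μ' : ℝ) (hμ : (∫ x, rhoTF V g Ω μ x) = 1)
    (hμ' : (∫ x, rhoTF V 1 (g ^ (-((s - 2) / (2 * (s + 3)))) * Ω) μ' x) = 1) :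
    ∀ᵐ x : E3,
      g ^ ((3 : ℝ) / (s + 3)) * rhoTF V g Ω μ ((g ^ ((1 : ℝ) / (s + 3))) • x) =
        rhoTF V 1 (g ^ (-((s - 2) / (2 * (s + 3)))) * Ω) μ' x := by
  have hs3 : s + 3 ≠ 0 := by linarith
  have hmass := integral_rhoTF_scaling hhom hs3 hg Ω μ
  have hae := rhoTF_ae_eq_of_integral_eq V zero_le_one _
    (hmass.trans (hμ.trans hμ'.symm)) (by rw [hmass, hμ]; exact one_ne_zero)
  filter_upwards [hae] with x hx
  rw [rhoTF_scaling hhom hs3 hg, hx]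

/-- **Exact scaling relation for the 3D Thomas–Fermi minimizer**: with
`ω = g^{−(s−2)/(2(s+3))} Ω`, the normalized minimizers satisfy
`g^{3/(s+3)} ρ^TF_{g,Ω}(g^{1/(s+3)} x) = ρ^TF_{1,ω}(x)` for a.e. `x ∈ ℝ³`. -/
theorem tf3_density_scaling (V : E3 → ℝ) (hVc : Continuous V) (s : ℝ) (hs : 2 < s)
    (hhom : Homogeneous V s) (hVpos : ∀ x : E3, ‖x‖ = 1 → 0 < V x)
    (g Ω : ℝ) (hg : 0 < g) (hΩ : 0 ≤ Ω)
    (μ μ' : ℝ) (hμ : (∫ x, rhoTF V g Ω μ x) = 1)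
    (hμ' : (∫ x, rhoTF V 1 (g ^ (-((s - 2) / (2 * (s + 3)))) * Ω) μ' x) = 1) :
    ∀ᵐ x : E3,
      g ^ ((3 : ℝ) / (s + 3)) * rhoTF V g Ω μ ((g ^ ((1 : ℝ) / (s + 3))) • x) =
        rhoTF V 1 (g ^ (-((s - 2) / (2 * (s + 3)))) * Ω) μ' x :=
  tf3_density_scaling_general V s hs hhom g Ω hg μ μ' hμ hμ'
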